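/- arXiv:2506.24091 — 7 statements merged into one kernel-verified Lean document; each statement's English description precedes it below -/
import Mathlib

section
/- Let L ⊆ ℚ² be a subgroup (lattice) containing an element (r, r) with r ∈ ℚ, r > 0, and suppose r is minimal among positive rationals s with (s, s) ∈ L. Let (x, y) ∈ L be an element minimizing y − x subject to y > x. Then L is generated as a group by (r, r) and (x, y). -/
/-- Let `L ⊆ ℚ²` be a subgroup (lattice) containing an element `(r, r)` with
`r > 0` minimal among positive rationals `s` with `(s, s) ∈ L`, and let `(x, y) ∈ L` minimize
`y − x` subject to `y > x`.  Then `L` is generated as a group by `(r, r)` and `(x, y)`. -/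
theorem stmt0 (L : AddSubgroup (ℚ × ℚ)) (r : ℚ) (hr : 0 < r) (hrL : (r, r) ∈ L)
    (hrmin : ∀ s : ℚ, 0 < s → (s, s) ∈ L → r ≤ s)
    (x y : ℚ) (hxy : (x, y) ∈ L) (hlt : x < y)
    (hmin : ∀ p : ℚ × ℚ, p ∈ L → p.1 < p.2 → y - x ≤ p.2 - p.1) :
    L = AddSubgroup.closure {(r, r), (x, y)} := by
  apply le_antisymm
  · rintro ⟨a, b⟩ hp
    have htpos : 0 < y - x := by linarith
    set n : ℤ := ⌊(b - a) / (y - x)⌋ with hn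
    have h1 : (n : ℚ) * (y - x) ≤ b - a := by
      have := Int.floor_le ((b - a) / (y - x))
      rw [le_div_iff₀ htpos] at this
      exact this
    have h2 : b - a < ((n : ℚ) + 1) * (y - x) := by
      have := Int.lt_floor_add_one ((b - a) / (y - x))
      rw [div_lt_iff₀ htpos] at this
      linarith
    have hq : (a - (n : ℚ) * x, b - (n : ℚ) * y) ∈ L := by
      have := L.sub_mem hp (L.zsmul_mem hxy n)
      simpa [Prod.smul_mk, zsmul_eq_mul, Prod.sub_def] using this
    have hge : 0 ≤ (b - (n : ℚ) * y) - (a - (n : ℚ) * x) := by nlinarith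
    have heq : (b : ℚ) - (n : ℚ) * y = a - (n : ℚ) * x := by
      rcases eq_or_lt_of_le hge with h | h
      · linarith
      · exfalso
        have := hmin (a - (n : ℚ) * x, b - (n : ℚ) * y) hq (by dsimp; linarith)
        dsimp at this
        nlinarith
    set c : ℚ := a - (n : ℚ) * x with hc
    have hcL : (c, c) ∈ L := by have h' := hq; rw [heq] at h'; exact h'
    set m : ℤ := ⌊c / r⌋ with hm
    have g1 : (m : ℚ) * r ≤ c := by
      have := Int.floor_le (c / r)
      rw [le_div_iff₀ hr] at this
      exact this
    have g2 : c < ((m : ℚ) + 1) * r := by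
      have := Int.lt_floor_add_one (c / r)
      rw [div_lt_iff₀ hr] at this
      linarith
    have hcmr : (c - (m : ℚ) * r, c - (m : ℚ) * r) ∈ L := by
      have := L.sub_mem hcL (L.zsmul_mem hrL m)
      simpa [Prod.smul_mk, zsmul_eq_mul, Prod.sub_def] using this
    have hcr : c = (m : ℚ) * r := by
      rcases eq_or_lt_of_le g1 with h | h
      · linarith
      · exfalso
        have := hrmin (c - (m : ℚ) * r) (by linarith) hcmr
        nlinarith
    have hmem : m • ((r, r) : ℚ × ℚ) + n • ((x, y) : ℚ × ℚ) ∈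
        AddSubgroup.closure {((r, r) : ℚ × ℚ), (x, y)} := by
      exact add_mem (zsmul_mem (AddSubgroup.subset_closure (by simp)) m)
        (zsmul_mem (AddSubgroup.subset_closure (by simp)) n)
    have : ((a, b) : ℚ × ℚ) = m • ((r, r) : ℚ × ℚ) + n • ((x, y) : ℚ × ℚ) := by
      simp only [Prod.smul_mk, zsmul_eq_mul, Prod.mk_add_mk, Prod.mk.injEq]
      constructor <;> linarith
    rw [this]
    exact hmem
  · rw [AddSubgroup.closure_le]
    rintro q hq
    rcases hq with h | h <;> subst h
    · exact hrL
    · exact hxy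
end

section
/- Let r > 0 be rational, and let L ⊆ ℚ² be the subgroup generated by (r, r) and (x, y) with y > x, where (r,r) realizes the minimal positive diagonal element of L and (x,y) minimizes y − x among elements with second coordinate strictly larger than first. Write x/r = a/b and y/r = c/d in lowest terms with positive denominators. Then L contains elements of the form (x₀, 0) and (0, y₀) generating L if and only if bc − ad = 1. -/
/-- Membership in the closure of a pair, written out with components. -/
lemma pair_mem_iff (g₁ g₂ z : ℚ × ℚ) :
    z ∈ AddSubgroup.closure {g₁, g₂} ↔
      ∃ m n : ℤ, ((m : ℚ) * g₁.1 + (n : ℚ) * g₂.1, (m : ℚ) * g₁.2 + (n : ℚ) * g₂.2) = z := by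
  rw [AddSubgroup.mem_closure_pair]
  constructor
  · rintro ⟨m, n, rfl⟩
    exact ⟨m, n, by simp [Prod.smul_def, zsmul_eq_mul, Prod.ext_iff]⟩
  · rintro ⟨m, n, rfl⟩
    exact ⟨m, n, by simp [Prod.smul_def, zsmul_eq_mul, Prod.ext_iff]⟩

/-- Let `L ⊆ ℚ²` be the lattice generated by `(r, r)` and `(x, y)` with
`y > x`, where `(r,r)` realizes the minimal positive diagonal element of `L` and `(x,y)`
minimizes `y − x` among elements with second coordinate strictly larger than the first.
Writing `x/r = a/b` and `y/r = c/d` in lowest terms with positive denominators, `L` is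
"aligned with the coordinate axes" (generated by elements of the form `(x₀, 0)`, `(0, y₀)`)
if and only if `b·c − a·d = 1`. -/
theorem stmt1 (L : AddSubgroup (ℚ × ℚ)) (r : ℚ) (hr : 0 < r) (hrL : (r, r) ∈ L)
    (hrmin : ∀ s : ℚ, 0 < s → (s, s) ∈ L → r ≤ s)
    (x y : ℚ) (hxy : (x, y) ∈ L) (hlt : x < y)
    (hmin : ∀ p : ℚ × ℚ, p ∈ L → p.1 < p.2 → y - x ≤ p.2 - p.1)
    (hgen : L = AddSubgroup.closure {(r, r), (x, y)}) :
    (∃ x₀ y₀ : ℚ, (x₀, (0 : ℚ)) ∈ L ∧ ((0 : ℚ), y₀) ∈ L ∧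
        L = AddSubgroup.closure {(x₀, (0 : ℚ)), ((0 : ℚ), y₀)}) ↔
      ((x / r).den : ℤ) * (y / r).num - (x / r).num * ((y / r).den : ℤ) = 1 := by
  have hr0 : r ≠ 0 := ne_of_gt hr
  set u : ℚ := x / r with hu
  set v : ℚ := y / r with hv
  set a : ℤ := u.num with ha
  set b : ℤ := (u.den : ℤ) with hb
  set c : ℤ := v.num with hc
  set d : ℤ := (v.den : ℤ) with hd
  have hbpos : (0 : ℤ) < b := Int.natCast_pos.mpr u.pos
  have hdpos : (0 : ℤ) < d := Int.natCast_pos.mpr v.pos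
  have hbQpos : (0 : ℚ) < (b : ℚ) := by exact_mod_cast hbpos
  have hdQpos : (0 : ℚ) < (d : ℚ) := by exact_mod_cast hdpos
  have hbQ : ((b : ℚ)) ≠ 0 := ne_of_gt hbQpos
  have hdQ : ((d : ℚ)) ≠ 0 := ne_of_gt hdQpos
  -- key cross-multiplication identities
  have hxb : x * (b : ℚ) = (a : ℚ) * r := by
    have h1 : (a : ℚ) / (b : ℚ) = u := by exact_mod_cast Rat.num_div_den u
    have h2 : u * r = x := div_mul_cancel₀ x hr0
    field_simp at h1
    rw [← h2, h1]; ring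
  have hyd : y * (d : ℚ) = (c : ℚ) * r := by
    have h1 : (c : ℚ) / (d : ℚ) = v := by exact_mod_cast Rat.num_div_den v
    have h2 : v * r = y := div_mul_cancel₀ y hr0
    field_simp at h1
    rw [← h2, h1]; ring
  -- positivity of the determinant
  have hdet_pos : 0 < b * c - a * d := by
    have huv : u < v := (div_lt_div_iff_of_pos_right hr).mpr hlt
    have h1 : (a : ℚ) / (b : ℚ) = u := by exact_mod_cast Rat.num_div_den u
    have h2 : (c : ℚ) / (d : ℚ) = v := by exact_mod_cast Rat.num_div_den v
    have h3 : (a : ℚ) * d < (c : ℚ) * b := by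
      rw [← div_lt_div_iff₀ hbQpos hdQpos, h1, h2]; exact huv
    have h4 : a * d < c * b := by exact_mod_cast h3
    have := mul_comm c b
    linarith
  -- coprimality
  have hab : IsCoprime (b : ℤ) (a : ℤ) := by
    rw [Int.isCoprime_iff_gcd_eq_one, Int.gcd_comm]
    simpa [Int.gcd, ha, hb, Nat.coprime_iff_gcd_eq_one] using u.reduced
  have hcd : IsCoprime (d : ℤ) (c : ℤ) := by
    rw [Int.isCoprime_iff_gcd_eq_one, Int.gcd_comm]
    simpa [Int.gcd, hc, hd, Nat.coprime_iff_gcd_eq_one] using v.reduced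
  constructor
  · -- forward direction
    rintro ⟨x₀, y₀, hx0L, hy0L, hL'⟩
    obtain ⟨m, n, hm⟩ := (pair_mem_iff _ _ _).mp (hL' ▸ hrL)
    obtain ⟨m₂, n₂, hm2⟩ := (pair_mem_iff _ _ _).mp (hL' ▸ hxy)
    obtain ⟨p, q, hp⟩ := (pair_mem_iff _ _ _).mp (hgen ▸ hx0L)
    rw [Prod.mk.injEq] at hm hm2 hp
    obtain ⟨hm1, -⟩ := hm
    obtain ⟨hx2, -⟩ := hm2
    obtain ⟨hp1, hp2⟩ := hp
    simp only [mul_zero, add_zero, zero_add] at hm1 hx2 hp1 hp2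
    -- integer relation: a * m = b * m₂
    have e1 : ((a : ℚ) * m - (b : ℚ) * m₂) * r = 0 := by
      linear_combination (-(m : ℚ)) * hxb + (b : ℚ) * (m₂ : ℚ) * hm1 + (-(b : ℚ) * (m : ℚ)) * hx2
    have E1 : a * m = b * m₂ := by
      have := (mul_eq_zero.mp e1).resolve_right hr0
      have h : (a : ℚ) * m = (b : ℚ) * m₂ := by linarith
      exact_mod_cast h
    -- integer relation: b = m * (p*b + q*a)
    have e2 : ((b : ℚ) - (m : ℚ) * ((p : ℚ) * b + (q : ℚ) * a)) * r = 0 := by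
      linear_combination (-(b : ℚ)) * hm1 - (m : ℚ) * (b : ℚ) * hp1 + (m : ℚ) * (q : ℚ) * hxb
    have E2 : b = m * (p * b + q * a) := by
      have := (mul_eq_zero.mp e2).resolve_right hr0
      have h : (b : ℚ) = (m : ℚ) * ((p : ℚ) * b + (q : ℚ) * a) := by linarith
      exact_mod_cast h
    -- integer relation: p*d + q*c = 0
    have e3 : ((p : ℚ) * d + (q : ℚ) * c) * r = 0 := by
      linear_combination (d : ℚ) * hp2 - (q : ℚ) * hyd
    have E3 : p * d + q * c = 0 := by
      have := (mul_eq_zero.mp e3).resolve_right hr0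
      exact_mod_cast this
    -- b ∣ m
    have hbm : b ∣ m := hab.dvd_of_dvd_mul_left ⟨m₂, by linarith [E1]⟩
    -- d ∣ q
    have hdq : d ∣ q := hcd.dvd_of_dvd_mul_left ⟨-p, by linarith [E3]⟩
    obtain ⟨s, hs⟩ := hbm
    obtain ⟨t, ht⟩ := hdq
    have hpd : p * d = -(d * t) * c := by rw [← ht]; linarith [E3]
    have hp' : p = -(t * c) := by
      have hd0 : d ≠ 0 := ne_of_gt hdpos
      have : d * p = d * (-(t * c)) := by ring_nf; ring_nf at hpd; linarith [hpd]
      exact mul_left_cancel₀ hd0 this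
    -- b = b * s * (p*b + q*a) = -b*s*t*(c*b - a*d)
    have hb0 : b ≠ 0 := ne_of_gt hbpos
    have key : b * 1 = b * (-(s * t) * (b * c - a * d)) := by
      calc b * 1 = b := by ring
        _ = m * (p * b + q * a) := E2
        _ = (b * s) * ((-(t * c)) * b + (d * t) * a) := by rw [hs, hp', ht]
        _ = b * (-(s * t) * (b * c - a * d)) := by ring
    have hunit : -(s * t) * (b * c - a * d) = 1 := (mul_left_cancel₀ hb0 key).symm
    have hdvd : (b * c - a * d) ∣ 1 := ⟨-(s * t), by linear_combination (-1 : ℤ) * hunit⟩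
    have := Int.isUnit_iff.mp (isUnit_of_dvd_one hdvd)
    omega
  · -- backward direction
    intro hdet
    have hdetQ : ((b : ℚ) * c - (a : ℚ) * d) = 1 := by exact_mod_cast hdet
    have hmem1 : ((r / (b : ℚ), (0 : ℚ)) : ℚ × ℚ) ∈ L := by
      rw [hgen]
      refine (pair_mem_iff _ _ _).mpr ⟨c, -d, ?_⟩
      rw [Prod.mk.injEq]
      constructor
      · rw [eq_div_iff hbQ]; push_cast; linear_combination (-(d : ℚ)) * hxb + r * hdetQ
      · push_cast; linear_combination (-1 : ℚ) * hyd
    have hmem2 : (((0 : ℚ), r / (d : ℚ)) : ℚ × ℚ) ∈ L := by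
      rw [hgen]
      refine (pair_mem_iff _ _ _).mpr ⟨-a, b, ?_⟩
      rw [Prod.mk.injEq]
      constructor
      · push_cast; linear_combination hxb
      · rw [eq_div_iff hdQ]; push_cast; linear_combination (b : ℚ) * hyd + r * hdetQ
    refine ⟨r / (b : ℚ), r / (d : ℚ), hmem1, hmem2, le_antisymm ?_ ?_⟩
    · rw [hgen]
      rw [AddSubgroup.closure_le]
      rintro z hz
      rcases hz with rfl | hz
      · exact (pair_mem_iff _ _ _).mpr ⟨b, d, by
          rw [Prod.mk.injEq]
          constructor
          · simp [mul_div_cancel₀, hbQ]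
          · simp [mul_div_cancel₀, hdQ]⟩
      · rcases hz with rfl
        exact (pair_mem_iff _ _ _).mpr ⟨a, c, by
          rw [Prod.mk.injEq]
          constructor
          · simp only [mul_zero, add_zero]
            rw [mul_div_assoc', eq_comm, eq_div_iff hbQ]; linarith [hxb]
          · simp only [mul_zero, zero_add]
            rw [mul_div_assoc', eq_comm, eq_div_iff hdQ]; linarith [hyd]⟩
    · rw [AddSubgroup.closure_le]
      rintro z hz
      rcases hz with rfl | hz
      · exact hmem1
      · rcases hz with rfl
        exact hmem2
end

section
/- Let N, d, e, s be natural numbers (d, N ≥ 1) and λ, λ' ∈ ℚ. Let L ⊆ ℚ² be the subgroup generated by (1/N, 1/N), (λ, λ'), and ((e/d)λ + s/(Nd), (e/d)λ' + s/(Nd)). Let g = gcd(d, e), let r be any integer with r·(e/g) ≡ 1 (mod d/g), and set λ̃ = (g/d)λ + rs/(Nd), λ̃' = (g/d)λ' + rs/(Nd), Ñ = N·g/gcd(d, e, s). Then L is generated by (1/Ñ, 1/Ñ) and (λ̃, λ̃'). -/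
set_option maxHeartbeats 1000000


/-- Let `N, d ≥ 1`, `e, s` be natural numbers and `λ, λ' ∈ ℚ`.  Let
`L ⊆ ℚ²` be the subgroup generated by `(1/N, 1/N)`, `(λ, λ')` and
`((e/d)λ + s/(Nd), (e/d)λ' + s/(Nd))`.  With `g = gcd(d, e)`, `r` any integer with
`r·(e/g) ≡ 1 (mod d/g)`, `λ̃ = (g/d)λ + rs/(Nd)`, `λ̃' = (g/d)λ' + rs/(Nd)` and
`Ñ = N·g/gcd(d, e, s)`, the lattice `L` is generated by `(1/Ñ, 1/Ñ)` and `(λ̃, λ̃')`. -/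
theorem stmt2 (N d e s : ℕ) (hN : 0 < N) (hd : 0 < d) (lam lam' : ℚ)
    (L : AddSubgroup (ℚ × ℚ))
    (hL : L = AddSubgroup.closure
      {((1 / N : ℚ), (1 / N : ℚ)), (lam, lam'),
        ((e / d : ℚ) * lam + s / (N * d), (e / d : ℚ) * lam' + s / (N * d))})
    (r : ℤ) (hr : r * ((e / Nat.gcd d e : ℕ) : ℤ) ≡ 1 [ZMOD ((d / Nat.gcd d e : ℕ) : ℤ)]) :
    L = AddSubgroup.closure
      {((1 / ((N * Nat.gcd d e / Nat.gcd (Nat.gcd d e) s : ℕ) : ℚ) : ℚ),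
        (1 / ((N * Nat.gcd d e / Nat.gcd (Nat.gcd d e) s : ℕ) : ℚ) : ℚ)),
       ((Nat.gcd d e / d : ℚ) * lam + r * s / (N * d),
        (Nat.gcd d e / d : ℚ) * lam' + r * s / (N * d))} := by
  have hg0 : 0 < Nat.gcd d e := Nat.gcd_pos_of_pos_left e hd
  set g : ℕ := Nat.gcd d e with hgdef
  have hg'0 : 0 < Nat.gcd g s := Nat.gcd_pos_of_pos_left s hg0
  set g' : ℕ := Nat.gcd g s with hg'def
  obtain ⟨d1, hd1⟩ : g ∣ d := Nat.gcd_dvd_left d e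
  obtain ⟨e1, he1⟩ : g ∣ e := Nat.gcd_dvd_right d e
  obtain ⟨g2, hg2⟩ : g' ∣ g := Nat.gcd_dvd_left g s
  obtain ⟨s1, hs1⟩ : g' ∣ s := Nat.gcd_dvd_right g s
  -- rationals nonzero
  have hNQ : (N:ℚ) ≠ 0 := Nat.cast_ne_zero.mpr hN.ne'
  have hdQ : (d:ℚ) ≠ 0 := Nat.cast_ne_zero.mpr hd.ne'
  have hgQ : (g:ℚ) ≠ 0 := Nat.cast_ne_zero.mpr hg0.ne'
  have hg'Q : (g':ℚ) ≠ 0 := Nat.cast_ne_zero.mpr hg'0.ne'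
  -- cast of Ñ
  have hNt : ((N * g / g' : ℕ) : ℚ) = (N:ℚ) * g / g' := by
    rw [Nat.cast_div ⟨N * g2, by rw [hg2]; ring⟩ hg'Q]
    push_cast; ring
  -- k from hr
  have hdg : (d / g : ℕ) = d1 := by rw [hd1, Nat.mul_div_cancel_left _ hg0]
  have heg : (e / g : ℕ) = e1 := by rw [he1, Nat.mul_div_cancel_left _ hg0]
  obtain ⟨k, hk⟩ : ((d1:ℤ)) ∣ (r * e1 - 1) := by
    have := hr.dvd
    rw [hdg, heg] at this
    simpa using (dvd_neg.mpr this)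
  -- Bezout
  obtain ⟨a, m, ham⟩ : ∃ a m : ℤ, (g':ℤ) = a * g + m * s :=
    ⟨Nat.gcdA g s, Nat.gcdB g s, by rw [hg'def, Nat.gcd_eq_gcd_ab]; ring⟩
  -- cast to ℚ
  have hd1Q : (d:ℚ) = g * d1 := by exact_mod_cast congrArg (Nat.cast : ℕ → ℚ) hd1
  have he1Q : (e:ℚ) = g * e1 := by exact_mod_cast congrArg (Nat.cast : ℕ → ℚ) he1
  have hg2Q : (g:ℚ) = g' * g2 := by exact_mod_cast congrArg (Nat.cast : ℕ → ℚ) hg2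
  have hs1Q : (s:ℚ) = g' * s1 := by exact_mod_cast congrArg (Nat.cast : ℕ → ℚ) hs1
  have hkQ : (r:ℚ) * e1 - 1 = d1 * k := by exact_mod_cast congrArg (Int.cast : ℤ → ℚ) hk
  have hamQ : (g':ℚ) = a * g + m * s := by exact_mod_cast congrArg (Int.cast : ℤ → ℚ) ham
  have hamQ' : (g':ℚ) = a * ((g':ℚ) * g2) + m * ((g':ℚ) * s1) := by
    rw [← hg2Q, ← hs1Q]; exact hamQ
  have hd1Q0 : (d1:ℚ) ≠ 0 := by
    intro h; rw [h, mul_zero] at hd1Q; exact hdQ hd1Q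
  have hg2Q0 : (g2:ℚ) ≠ 0 := by
    intro h; rw [h, mul_zero] at hg2Q; exact hgQ hg2Q
  rw [hL]
  apply le_antisymm
  · rw [AddSubgroup.closure_le]
    intro x hx
    rw [SetLike.mem_coe]
    have hP : ((1 / ((N * g / g' : ℕ) : ℚ) : ℚ), (1 / ((N * g / g' : ℕ) : ℚ) : ℚ)) ∈
        AddSubgroup.closure {((1 / ((N * g / g' : ℕ) : ℚ) : ℚ), (1 / ((N * g / g' : ℕ) : ℚ) : ℚ)),
          ((g / d : ℚ) * lam + r * s / (N * d), (g / d : ℚ) * lam' + r * s / (N * d))} :=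
      AddSubgroup.subset_closure (by left; rfl)
    have hQ : ((g / d : ℚ) * lam + r * s / (N * d), (g / d : ℚ) * lam' + r * s / (N * d)) ∈
        AddSubgroup.closure {((1 / ((N * g / g' : ℕ) : ℚ) : ℚ), (1 / ((N * g / g' : ℕ) : ℚ) : ℚ)),
          ((g / d : ℚ) * lam + r * s / (N * d), (g / d : ℚ) * lam' + r * s / (N * d))} :=
      AddSubgroup.subset_closure (by right; rfl)
    simp only [Set.mem_insert_iff, Set.mem_singleton_iff] at hx
    rcases hx with rfl | rfl | rfl
    · -- A = g2 • P
      have hx : ((1 / N : ℚ), (1 / N : ℚ)) = ((g2:ℤ)) •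
          ((1 / ((N * g / g' : ℕ) : ℚ) : ℚ), (1 / ((N * g / g' : ℕ) : ℚ) : ℚ)) := by
        simp only [Prod.smul_mk, Prod.mk.injEq, zsmul_eq_mul, hNt]
        constructor <;> · push_cast; simp only [hg2Q]; field_simp
      rw [hx]; exact AddSubgroup.zsmul_mem _ hP _
    · -- B = d1 • Q + (-(r*s1)) • P
      have hx : ((lam : ℚ), (lam' : ℚ)) = ((d1:ℤ)) •
          ((g / d : ℚ) * lam + r * s / (N * d), (g / d : ℚ) * lam' + r * s / (N * d)) +
          (-(r * s1)) • ((1 / ((N * g / g' : ℕ) : ℚ) : ℚ), (1 / ((N * g / g' : ℕ) : ℚ) : ℚ)) := by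
        simp only [Prod.smul_mk, Prod.mk_add_mk, Prod.mk.injEq, zsmul_eq_mul, hNt]
        constructor <;>
        · push_cast
          simp only [hd1Q, he1Q, hs1Q, hg2Q]
          field_simp
          ring
      rw [hx]
      exact AddSubgroup.add_mem _ (AddSubgroup.zsmul_mem _ hQ _) (AddSubgroup.zsmul_mem _ hP _)
    · -- C = e1 • Q + (-(k*s1)) • P
      have hx : ((e / d : ℚ) * lam + s / (N * d), (e / d : ℚ) * lam' + s / (N * d)) = ((e1:ℤ)) •
          ((g / d : ℚ) * lam + r * s / (N * d), (g / d : ℚ) * lam' + r * s / (N * d)) +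
          (-(k * s1)) • ((1 / ((N * g / g' : ℕ) : ℚ) : ℚ), (1 / ((N * g / g' : ℕ) : ℚ) : ℚ)) := by
        simp only [Prod.smul_mk, Prod.mk_add_mk, Prod.mk.injEq, zsmul_eq_mul, hNt]
        constructor <;>
        · push_cast
          simp only [hd1Q, he1Q, hs1Q, hg2Q]
          field_simp
          linear_combination (-(s1:ℚ)) * hkQ
      rw [hx]
      exact AddSubgroup.add_mem _ (AddSubgroup.zsmul_mem _ hQ _) (AddSubgroup.zsmul_mem _ hP _)
  · rw [AddSubgroup.closure_le]
    intro x hx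
    rw [SetLike.mem_coe]
    have hA : ((1 / N : ℚ), (1 / N : ℚ)) ∈ AddSubgroup.closure
        {((1 / N : ℚ), (1 / N : ℚ)), (lam, lam'),
          ((e / d : ℚ) * lam + s / (N * d), (e / d : ℚ) * lam' + s / (N * d))} :=
      AddSubgroup.subset_closure (by left; rfl)
    have hB : ((lam:ℚ), (lam':ℚ)) ∈ AddSubgroup.closure
        {((1 / N : ℚ), (1 / N : ℚ)), (lam, lam'),
          ((e / d : ℚ) * lam + s / (N * d), (e / d : ℚ) * lam' + s / (N * d))} :=
      AddSubgroup.subset_closure (by right; left; rfl)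
    have hC : ((e / d : ℚ) * lam + s / (N * d), (e / d : ℚ) * lam' + s / (N * d)) ∈
        AddSubgroup.closure
        {((1 / N : ℚ), (1 / N : ℚ)), (lam, lam'),
          ((e / d : ℚ) * lam + s / (N * d), (e / d : ℚ) * lam' + s / (N * d))} :=
      AddSubgroup.subset_closure (by right; right; rfl)
    simp only [Set.mem_insert_iff, Set.mem_singleton_iff] at hx
    rcases hx with rfl | rfl
    · -- P = a • A + (-(e1*m)) • B + (d1*m) • C
      have hx : ((1 / ((N * g / g' : ℕ) : ℚ) : ℚ), (1 / ((N * g / g' : ℕ) : ℚ) : ℚ)) =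
          a • ((1 / N : ℚ), (1 / N : ℚ)) + (-(e1 * m)) • ((lam:ℚ), (lam':ℚ)) +
          ((d1 * m)) • ((e / d : ℚ) * lam + s / (N * d), (e / d : ℚ) * lam' + s / (N * d)) := by
        simp only [Prod.smul_mk, Prod.mk_add_mk, Prod.mk.injEq, zsmul_eq_mul, hNt]
        constructor <;>
        · push_cast
          simp only [hd1Q, he1Q, hs1Q, hg2Q]
          field_simp
          linear_combination (mul_left_cancel₀ hg'Q (by linear_combination hamQ' : (g':ℚ) * 1 = g' * (a*g2 + m*s1)))
      rw [hx]
      exact AddSubgroup.add_mem _ (AddSubgroup.add_mem _ (AddSubgroup.zsmul_mem _ hA _)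
        (AddSubgroup.zsmul_mem _ hB _)) (AddSubgroup.zsmul_mem _ hC _)
    · -- Q = (-k) • B + r • C
      have hx : ((g / d : ℚ) * lam + r * s / (N * d), (g / d : ℚ) * lam' + r * s / (N * d)) =
          (-k) • ((lam:ℚ), (lam':ℚ)) +
          r • ((e / d : ℚ) * lam + s / (N * d), (e / d : ℚ) * lam' + s / (N * d)) := by
        simp only [Prod.smul_mk, Prod.mk_add_mk, Prod.mk.injEq, zsmul_eq_mul]
        constructor
        · push_cast
          simp only [hd1Q, he1Q, hs1Q, hg2Q]
          field_simp
          linear_combination (-(g2:ℚ) * lam * N) * hkQ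
        · push_cast
          simp only [hd1Q, he1Q, hs1Q, hg2Q]
          field_simp
          linear_combination (-(g2:ℚ) * lam' * N) * hkQ
      rw [hx]
      exact AddSubgroup.add_mem _ (AddSubgroup.zsmul_mem _ hB _) (AddSubgroup.zsmul_mem _ hC _)
end

section
/- Let A ⊆ B be an extension of Noetherian domains with B finite over A, let I ⊂ A be a prime ideal such that A/I is integrally closed in its fraction field, and suppose the induced extension Frac(A/I) ⊆ Frac(B/√(IB)) of residue fields is an isomorphism (e.g. the extension is totally ramified over I of degree prime to all residue characteristics). Then the inclusion A/I ⊆ B/√(IB) is an equality. -/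
set_option maxHeartbeats 1000000


/-- Let `A ⊆ B` be an extension of Noetherian domains with `B` finite over
`A`, let `I ⊂ A` be a prime ideal with `A/I` integrally closed in its fraction field, and
let `J = √(I·B)`, assumed prime.  If the induced (injective) map `φ : A/I → B/J` becomes an
isomorphism on fraction fields (every element of `B/J` is a ratio `φ(p)/φ(q)`), then `φ` is
surjective, i.e. `A/I ⊆ B/√(IB)` is an equality. -/
theorem stmt7 (A B : Type*) [CommRing A] [CommRing B] [IsDomain A] [IsDomain B]
    [IsNoetherianRing A] [IsNoetherianRing B] [Algebra A B]
    (hinj : Function.Injective (algebraMap A B)) [Module.Finite A B]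
    (I : Ideal A) [I.IsPrime] [IsIntegrallyClosed (A ⧸ I)]
    (J : Ideal B) (hJ : J = (I.map (algebraMap A B)).radical) (hJp : J.IsPrime)
    (hle : I ≤ J.comap (algebraMap A B))
    (φ : A ⧸ I →+* B ⧸ J) (hφ : φ = Ideal.quotientMap J (algebraMap A B) hle)
    (hφinj : Function.Injective φ)
    (hfrac : ∀ b : B ⧸ J, ∃ p q : A ⧸ I, q ≠ 0 ∧ φ q * b = φ p) :
    Function.Surjective φ := by
  haveI : J.IsPrime := hJp
  -- φ is an integral ring hom
  have hcomp : φ.comp (Ideal.Quotient.mk I) = (Ideal.Quotient.mk J).comp (algebraMap A B) := by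
    subst hφ; exact Ideal.quotientMap_comp_mk hle
  have hint : φ.IsIntegral := by
    rintro ⟨x⟩
    obtain ⟨f, fm, hf⟩ := Algebra.IsIntegral.isIntegral (R := A) x
    refine ⟨f.map (Ideal.Quotient.mk I), fm.map _, ?_⟩
    have : (Ideal.Quotient.mk J) (Polynomial.eval₂ (algebraMap A B) x f) = 0 := by
      rw [hf, map_zero]
    rw [Polynomial.hom_eval₂, ← hcomp] at this
    rw [← Polynomial.eval₂_map] at this; exact this
  intro b
  obtain ⟨p, q, hq, hpq⟩ := hfrac b
  set K := FractionRing (A ⧸ I)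
  set L := FractionRing (B ⧸ J)
  let g : (A ⧸ I) →+* L := (algebraMap (B ⧸ J) L).comp φ
  have hg : Function.Injective g := (IsFractionRing.injective _ _).comp hφinj
  let ψ : K →+* L := IsFractionRing.lift hg
  set q' : nonZeroDivisors (A ⧸ I) := ⟨q, mem_nonZeroDivisors_of_ne_zero hq⟩
  set x : K := IsLocalization.mk' K p q'
  have hgq : g q ≠ 0 := fun h => hq (hg (by rw [h, map_zero]))
  have hgapp : ∀ a, g a = algebraMap (B ⧸ J) L (φ a) := fun a => rfl
  have hx : ψ x = algebraMap (B ⧸ J) L b := by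
    have h1 : ψ x = g p / g q := IsFractionRing.lift_mk' hg p q'
    have h2 : g p = g q * algebraMap (B ⧸ J) L b := by
      rw [hgapp, hgapp, ← map_mul, hpq]
    rw [h1, h2, mul_comm, mul_div_assoc, div_self hgq, mul_one]
  have hψalg : ∀ a, ψ (algebraMap (A ⧸ I) K a) = g a := fun a =>
    IsFractionRing.lift_algebraMap hg a
  have hψcomp : ψ.comp (algebraMap (A ⧸ I) K) = g := RingHom.ext hψalg
  have hxint : IsIntegral (A ⧸ I) x := by
    obtain ⟨f, fm, hf⟩ := hint b
    refine ⟨f, fm, ?_⟩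
    have hψinj : Function.Injective ψ := ψ.injective
    apply hψinj
    rw [map_zero, Polynomial.hom_eval₂, hψcomp, hx]
    have h3 : Polynomial.eval₂ g ((algebraMap (B ⧸ J) L) b) f
        = algebraMap (B ⧸ J) L (Polynomial.eval₂ φ b f) :=
      (Polynomial.hom_eval₂ f φ (algebraMap (B ⧸ J) L) b).symm
    rw [h3, hf, map_zero]
  obtain ⟨y, hy⟩ := IsIntegrallyClosed.isIntegral_iff.mp hxint
  have hy' : algebraMap (A ⧸ I) K (y * q) = algebraMap (A ⧸ I) K p := by
    rw [map_mul, hy]; exact IsLocalization.mk'_spec K p q'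
  have hyq : y * q = p := IsFractionRing.injective _ _ hy'
  refine ⟨y, ?_⟩
  have h4 : φ q * φ y = φ q * b := by
    rw [← map_mul, mul_comm q y, hyq, hpq]
  have hφq : φ q ≠ 0 := fun h => hq (hφinj (by rw [h, map_zero]))
  exact mul_left_cancel₀ hφq h4
end

section
/- Let 𝒳 be a local arithmetic surface (Spec of a 2-dimensional normal complete local ring over a complete DVR with maximal ideal 𝔪) with two vertical reduced divisors D = div(α) and E = div(β) that are relatively prime and both principal. If the length of 𝒳/(α, β) over the base DVR equals 1 (i.e., the intersection number (D, E) = 1), then 𝒳 is regular; moreover D and E are then themselves prime divisors. -/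
open IsLocalRing Submodule

private lemma artinian_of_smul_max {A : Type*} [CommRing A] [IsLocalRing A]
    {M : Type*} [AddCommGroup M] [Module A M] [Module.Finite A M]
    (h : ∀ a ∈ maximalIdeal A, ∀ x : M, a • x = 0) : IsArtinian A M := by
  have hss : IsSemisimpleModule A M := by
    apply IsSemisimpleModule.of_sSup_simples_eq_top
    rw [eq_top_iff]
    intro x _
    rcases eq_or_ne x 0 with rfl | hx
    · exact Submodule.zero_mem _
    · have hker : LinearMap.ker (LinearMap.toSpanSingleton A M x) = maximalIdeal A := by
        refine ((maximalIdeal.isMaximal A).eq_of_le ?_ ?_).symm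
        · intro hT
          have : (1 : A) ∈ LinearMap.ker (LinearMap.toSpanSingleton A M x) := by
            rw [hT]; trivial
          simp [LinearMap.mem_ker, LinearMap.toSpanSingleton_apply] at this
          exact hx this
        · intro a ha
          simpa [LinearMap.mem_ker, LinearMap.toSpanSingleton_apply] using h a ha x
      have hsimple : IsSimpleModule A (Submodule.span A {x}) := by
        rw [isSimpleModule_iff_quot_maximal]
        refine ⟨maximalIdeal A, maximalIdeal.isMaximal A, ⟨?_⟩⟩
        have e1 : (Submodule.span A {x}) ≃ₗ[A] LinearMap.range (LinearMap.toSpanSingleton A M x) :=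
          LinearEquiv.ofEq _ _ (LinearMap.span_singleton_eq_range A M x)
        have e2 : (A ⧸ LinearMap.ker (LinearMap.toSpanSingleton A M x)) ≃ₗ[A]
            LinearMap.range (LinearMap.toSpanSingleton A M x) :=
          LinearMap.quotKerEquivRange (LinearMap.toSpanSingleton A M x)
        have e3 : (A ⧸ LinearMap.ker (LinearMap.toSpanSingleton A M x)) ≃ₗ[A]
            A ⧸ maximalIdeal A := Submodule.quotEquivOfEq _ _ hker
        exact (e1.trans e2.symm).trans e3
      exact le_sSup (s := {m : Submodule A M | IsSimpleModule A m}) hsimple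
        (Submodule.mem_span_singleton_self x)
  infer_instance

private lemma artinian_quot_of_pow_le {A : Type*} [CommRing A] [IsLocalRing A]
    [IsNoetherianRing A] :
    ∀ (N : ℕ) (I : Ideal A), maximalIdeal A ^ N ≤ I → IsArtinian A (A ⧸ I) := by
  intro N
  induction N with
  | zero =>
    intro I hI
    rw [pow_zero, Ideal.one_eq_top, top_le_iff] at hI
    subst hI
    have : Subsingleton (A ⧸ (⊤ : Ideal A)) := Ideal.Quotient.subsingleton_iff.mpr rfl
    infer_instance
  | succ N ih =>
    intro I hI
    have hA : IsNoetherian A A := isNoetherianRing_iff.mp ‹_›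
    set I' : Ideal A := I ⊔ maximalIdeal A ^ N with hI'def
    have hII' : I ≤ I' := le_sup_left
    have hquot : IsArtinian A (A ⧸ I') := ih I' le_sup_right
    set S : Submodule A (A ⧸ I) := Submodule.map I.mkQ I' with hSdef
    rw [isArtinian_iff_submodule_quotient S]
    constructor
    · have hfg : S.FG := IsNoetherian.noetherian S
      have : Module.Finite A S := Module.Finite.iff_fg.mpr hfg
      apply artinian_of_smul_max
      intro a ha x
      obtain ⟨v, hv⟩ := x
      obtain ⟨y, hy, rfl⟩ := hv
      apply Subtype.ext
      show a • (I.mkQ y) = 0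
      rw [← map_smul, Submodule.mkQ_apply, Submodule.Quotient.mk_eq_zero]
      have : a • y ∈ maximalIdeal A * I' := Ideal.mul_mem_mul ha hy
      refine (?_ : maximalIdeal A * I' ≤ I) this
      rw [hI'def, Ideal.mul_sup]
      apply sup_le
      · exact Ideal.mul_le_right
      · rw [← pow_succ']
        exact hI
    · exact isArtinian_of_linearEquiv (Submodule.quotientQuotientEquivQuotient I I' hII').symm

private lemma no_primary_principal {A : Type*} [CommRing A] [IsDomain A] [IsLocalRing A]
    [IsNoetherianRing A] {p : Ideal A} [hp : p.IsPrime] (hp0 : p ≠ ⊥)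
    (hpm : p < maximalIdeal A) {α : A} (hα : α ≠ 0) (hαm : α ∈ maximalIdeal A)
    {N : ℕ} (hN : maximalIdeal A ^ N ≤ Ideal.span {α}) : False := by
  have hA : IsNoetherian A A := isNoetherianRing_iff.mp ‹_›
  -- α ∉ p
  have hαp : α ∉ p := by
    intro h
    have h1 : maximalIdeal A ^ N ≤ p := hN.trans (by rwa [Ideal.span_le, Set.singleton_subset_iff])
    have h2 : maximalIdeal A ≤ p := hp.le_of_pow_le h1
    exact absurd (lt_of_lt_of_le hpm h2) (lt_irrefl p)
  set L := Localization.AtPrime p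
  set φ := algebraMap A L with hφ
  set Q : ℕ → Ideal A := fun n => Ideal.comap φ (Ideal.map φ (p ^ n)) with hQ
  have hQanti : ∀ n, Q (n + 1) ≤ Q n := fun n =>
    Ideal.comap_mono (Ideal.map_mono (Ideal.pow_le_pow_right (Nat.le_succ n)))
  have hart : IsArtinian A (A ⧸ Ideal.span {α}) := artinian_quot_of_pow_le N _ hN
  -- stabilization of images in A / (α)
  obtain ⟨n, hn⟩ := IsArtinian.monotone_stabilizes
    (⟨fun n => Submodule.map (Ideal.span {α}).mkQ (Q n), fun i j hij =>
        Submodule.map_mono (Ideal.comap_mono (Ideal.map_mono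
          (Ideal.pow_le_pow_right hij)))⟩ :
      ℕ →o (Submodule A (A ⧸ Ideal.span {α}))ᵒᵈ)
  have hst : Q n ≤ Q (n + 1) ⊔ Ideal.span {α} := by
    have := hn (n + 1) (Nat.le_succ n)
    change Submodule.map (Ideal.span {α}).mkQ (Q n) = Submodule.map (Ideal.span {α}).mkQ (Q (n + 1)) at this
    calc Q n ≤ Submodule.comap (Ideal.span {α}).mkQ
          (Submodule.map (Ideal.span {α}).mkQ (Q n)) := Submodule.le_comap_map _ _
      _ = Submodule.comap (Ideal.span {α}).mkQ
          (Submodule.map (Ideal.span {α}).mkQ (Q (n+1))) := by rw [← this]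
      _ = Q (n + 1) ⊔ Ideal.span {α} := by
          rw [Submodule.comap_map_eq, Submodule.ker_mkQ]
  -- primary property: refine to Q n ≤ Q (n+1) ⊔ (span α) • Q n
  have hαunit : IsUnit (φ α) := IsLocalization.map_units L (⟨α, hαp⟩ : p.primeCompl)
  have hstep : Q n ≤ Q (n + 1) ⊔ (Ideal.span {α}) • Q n := by
    intro x hx
    obtain ⟨y, hy, z, hz, rfl⟩ := Submodule.mem_sup.mp (hst hx)
    obtain ⟨c, rfl⟩ := Ideal.mem_span_singleton'.mp hz
    have hcα : c * α ∈ Q n := by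
      have : y ∈ Q n := hQanti n hy
      have := (Q n).sub_mem hx this
      simpa using this
    have hc : c ∈ Q n := by
      have h1 : φ (c * α) ∈ Ideal.map φ (p ^ n) := hcα
      rw [map_mul] at h1
      have h2 : φ c ∈ Ideal.map φ (p ^ n) := by
        obtain ⟨u, hu⟩ := hαunit
        have := Ideal.mul_mem_right (↑u⁻¹) _ h1
        rwa [mul_assoc, ← hu, Units.mul_inv, mul_one] at this
      exact h2
    have hmem : c * α ∈ Ideal.span {α} • Q n := by
      rw [mul_comm c α]
      exact Submodule.smul_mem_smul (Ideal.mem_span_singleton_self α) hc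
    exact Submodule.add_mem _ (Submodule.mem_sup_left hy) (Submodule.mem_sup_right hmem)
  -- Nakayama downstairs
  have hQeq : Q n = Q (n + 1) := by
    refine le_antisymm ?_ (hQanti n)
    refine Submodule.le_of_le_smul_of_le_jacobson_bot (IsNoetherian.noetherian _) ?_ hstep
    rw [jacobson_eq_maximalIdeal ⊥ bot_ne_top]
    rwa [Ideal.span_le, Set.singleton_subset_iff]
  -- push to the localization
  have hmap : ∀ k, Ideal.map φ (Q k) = Ideal.map φ (p ^ k) := fun k =>
    le_antisymm Ideal.map_comap_le (Ideal.map_mono Ideal.le_comap_map)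
  have hMeq : Ideal.map φ p ^ n = Ideal.map φ p ^ (n + 1) := by
    rw [← Ideal.map_pow, ← Ideal.map_pow, ← hmap n, ← hmap (n+1), hQeq]
  have hLnoeth : IsNoetherianRing L := IsLocalization.isNoetherianRing p.primeCompl L ‹_›
  have hML : Ideal.map φ p ≤ maximalIdeal L := by
    rw [Localization.AtPrime.map_eq_maximalIdeal]
  have hbot : Ideal.map φ p ^ n = ⊥ := by
    refine Submodule.eq_bot_of_le_smul_of_le_jacobson_bot (Ideal.map φ p) _
      (IsNoetherian.noetherian _) ?_ ?_
    · rw [smul_eq_mul, ← pow_succ']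
      exact le_of_eq hMeq
    · rw [jacobson_eq_maximalIdeal ⊥ bot_ne_top]
      exact hML
  -- contradiction
  obtain ⟨z, hzp, hz0⟩ := Submodule.exists_mem_ne_zero_of_ne_bot hp0
  have hinj : Function.Injective φ :=
    IsLocalization.injective L p.primeCompl_le_nonZeroDivisors
  have : φ z ^ n ∈ Ideal.map φ p ^ n := Ideal.pow_mem_pow (Ideal.mem_map_of_mem φ hzp) n
  rw [hbot, Ideal.mem_bot] at this
  have : φ z = 0 := pow_eq_zero_iff' .. |>.mp this |>.1
  exact hz0 (hinj (by rwa [map_zero]))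

private lemma key_prime {A : Type*} [CommRing A] [IsDomain A] [IsLocalRing A]
    [IsNoetherianRing A] (hdim : ringKrullDim A = 2) (α β : A) (hα : α ≠ 0)
    (hlen : Ideal.span {α, β} = maximalIdeal A) : Prime α := by
  have hA : IsNoetherian A A := isNoetherianRing_iff.mp ‹_›
  have hαm : α ∈ maximalIdeal A := hlen ▸ Ideal.subset_span (Set.mem_insert _ _)
  have hβm : β ∈ maximalIdeal A := hlen ▸ Ideal.subset_span (by simp)
  -- Step 1: a prime strictly between ⊥ and the maximal ideal
  obtain ⟨p, hpprime, hp0, hpm⟩ :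
      ∃ p : Ideal A, p.IsPrime ∧ p ≠ ⊥ ∧ p < maximalIdeal A := by
    by_contra hcon
    push_neg at hcon
    have hle : ringKrullDim A ≤ 1 := by
      rw [ringKrullDim, Order.krullDim]
      apply iSup_le
      intro l
      by_contra hlen2
      push_neg at hlen2
      have h2 : 2 ≤ l.length := by
        by_contra h
        push_neg at h
        interval_cases h' : l.length <;> simp_all <;> norm_num at hlen2
      have h01 : l ⟨0, by omega⟩ < l ⟨1, by omega⟩ := l.strictMono (by simp [Fin.lt_def])
      have h12 : l ⟨1, by omega⟩ < l ⟨2, by omega⟩ := l.strictMono (by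
        show (⟨1, by omega⟩ : Fin (l.length + 1)) < ⟨2, by omega⟩
        simp [Fin.lt_def])
      set P := (l ⟨1, by omega⟩)
      have hPprime : P.asIdeal.IsPrime := P.2
      have hlt1 : (l ⟨0, by omega⟩).asIdeal < P.asIdeal := h01
      have hlt2 : P.asIdeal < (l ⟨2, by omega⟩).asIdeal := h12
      refine hcon P.asIdeal hPprime ?_ ?_
      · exact ne_bot_of_gt (lt_of_le_of_lt bot_le hlt1)
      · exact lt_of_lt_of_le hlt2 (le_maximalIdeal (l ⟨2, by omega⟩).2.ne_top)
    rw [hdim] at hle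
    norm_num at hle
  haveI := hpprime
  -- Step 2: the quotient ring B
  set I : Ideal A := Ideal.span {α} with hI
  have hIm : I ≤ maximalIdeal A := by
    rw [hI, Ideal.span_le]; simpa using hαm
  have hInetop : I ≠ ⊤ := fun h =>
    (maximalIdeal.isMaximal A).ne_top (top_le_iff.mp (h ▸ hIm))
  haveI : Nontrivial (A ⧸ I) := Ideal.Quotient.nontrivial_iff.mpr hInetop
  haveI : IsLocalRing (A ⧸ I) := IsLocalRing.of_surjective' (Ideal.Quotient.mk I) Ideal.Quotient.mk_surjective
  set b : A ⧸ I := Ideal.Quotient.mk I β with hb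
  -- the maximal ideal of the quotient is (b)
  have hmaxB : maximalIdeal (A ⧸ I) = Ideal.span {b} := by
    have hmap : Ideal.map (Ideal.Quotient.mk I) (maximalIdeal A) = Ideal.span {b} := by
      rw [← hlen, Ideal.map_span, Set.image_pair]
      have hα0 : Ideal.Quotient.mk I α = 0 := Ideal.Quotient.eq_zero_iff_mem.mpr
        (Ideal.subset_span rfl)
      rw [hα0, ← hb]
      exact Submodule.span_insert_zero
    have hmax : (Ideal.map (Ideal.Quotient.mk I) (maximalIdeal A)).IsMaximal := by
      rcases Ideal.map_eq_top_or_isMaximal_of_surjective (Ideal.Quotient.mk I) Ideal.Quotient.mk_surjective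
        (maximalIdeal.isMaximal A) with h | h
      · exfalso
        have h2 := congrArg (Ideal.comap (Ideal.Quotient.mk I)) h
        rw [Ideal.comap_map_of_surjective _ Ideal.Quotient.mk_surjective,
          Ideal.comap_top, ← RingHom.ker_eq_comap_bot, Ideal.mk_ker] at h2
        have h3 : maximalIdeal A = ⊤ := by
          rw [sup_eq_left.mpr hIm] at h2
          exact h2
        exact (maximalIdeal.isMaximal A).ne_top h3
      · exact h
    rw [← hmap]
    exact (eq_maximalIdeal hmax).symm
  -- b is not nilpotent
  have hbnil : ∀ k : ℕ, b ^ k ≠ 0 := by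
    intro k hk
    have hβk : β ^ k ∈ I := by
      rwa [hb, ← map_pow, Ideal.Quotient.eq_zero_iff_mem] at hk
    have hrad : maximalIdeal A ≤ I.radical := by
      rw [← hlen, Ideal.span_le]
      rintro x (rfl | rfl)
      · exact Ideal.le_radical (Ideal.subset_span rfl)
      · exact ⟨k, hβk⟩
    obtain ⟨N, hN⟩ := Ideal.exists_radical_pow_le_of_fg (I := I) (IsNoetherian.noetherian _)
    have hfin : maximalIdeal A ^ N ≤ I := le_trans (Ideal.pow_right_mono hrad N) hN
    exact no_primary_principal hp0 hpm hα hαm hfin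
  -- every nonzero element of the quotient is a unit times a power of b
  have hKrull : ⨅ n : ℕ, maximalIdeal (A ⧸ I) ^ n = ⊥ :=
    Ideal.iInf_pow_eq_bot_of_isLocalRing _ (maximalIdeal.isMaximal _).ne_top
  have hdecomp : ∀ x : A ⧸ I, x ≠ 0 → ∃ (u : A ⧸ I) (k : ℕ), IsUnit u ∧ x = u * b ^ k := by
    intro x hx
    have hex : ∃ k, x ∉ maximalIdeal (A ⧸ I) ^ k := by
      by_contra h
      push_neg at h
      apply hx
      have hmem : x ∈ ⨅ n : ℕ, maximalIdeal (A ⧸ I) ^ n := Submodule.mem_iInf _ |>.mpr h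
      rwa [hKrull, Submodule.mem_bot] at hmem
    classical
    set k₀ := Nat.find hex with hk₀
    have hk₀pos : 0 < k₀ := by
      rcases Nat.eq_zero_or_pos k₀ with h | h
      · exfalso
        have h5 := Nat.find_spec hex
        rw [← hk₀, h] at h5
        simp at h5
      · exact h
    set k := k₀ - 1 with hkdef
    have hxk : x ∈ maximalIdeal (A ⧸ I) ^ k := by
      by_contra h
      have h9 : k₀ ≤ k := Nat.find_le h
      omega
    have hxk1 : x ∉ maximalIdeal (A ⧸ I) ^ k₀ := Nat.find_spec hex
    have hkk : k + 1 = k₀ := by omega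
    rw [hmaxB, Ideal.span_singleton_pow] at hxk
    obtain ⟨c, hc⟩ := Ideal.mem_span_singleton'.mp hxk
    have hcunit : IsUnit c := by
      by_contra hcu
      have hcm : c ∈ maximalIdeal (A ⧸ I) := hcu
      rw [hmaxB] at hcm
      obtain ⟨d, hd⟩ := Ideal.mem_span_singleton'.mp hcm
      apply hxk1
      rw [← hkk, hmaxB, Ideal.span_singleton_pow]
      exact Ideal.mem_span_singleton'.mpr ⟨d, by rw [← hc, ← hd]; ring⟩
    exact ⟨c, k, hcunit, hc.symm⟩
  -- the quotient is a domain
  haveI : NoZeroDivisors (A ⧸ I) := by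
    constructor
    intro x y hxy
    by_contra h
    push_neg at h
    obtain ⟨hx, hy⟩ := h
    obtain ⟨u, k, hu, rfl⟩ := hdecomp x hx
    obtain ⟨v, l, hv, rfl⟩ := hdecomp y hy
    have h6 : (u * v) * b ^ (k + l) = 0 := by rw [pow_add]; linear_combination hxy
    have hb0 : b ^ (k + l) = 0 := by
      have h7 : ((hu.mul hv).unit⁻¹ : (A ⧸ I)ˣ) * ((u * v) * b ^ (k + l))
          = ((hu.mul hv).unit⁻¹ : (A ⧸ I)ˣ) * 0 := by rw [h6]
      rwa [mul_zero, ← mul_assoc, IsUnit.val_inv_mul, one_mul] at h7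
    exact hbnil _ hb0
  haveI : IsDomain (A ⧸ I) := NoZeroDivisors.to_isDomain _
  have hIprime : I.IsPrime := (Ideal.Quotient.isDomain_iff_prime I).mp ‹_›
  exact (Ideal.span_singleton_prime hα).mp hIprime


/-- Let `A` be a local arithmetic surface (2-dimensional normal complete
Noetherian local domain over a complete DVR `𝒪`), and let `D = div(α)`, `E = div(β)` be two
vertical (each divides a power of the uniformizer), reduced (squarefree), relatively prime
principal divisors.  If the length of `A/(α, β)` is `1` (encoded, as in the paper, by
`(α, β)` being the maximal ideal), then `A` is regular; moreover `D` and `E` are then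
themselves prime divisors (i.e. `α` and `β` are prime elements). -/
theorem stmt9 (A : Type*) [CommRing A] [IsDomain A] [IsLocalRing A] [IsNoetherianRing A]
    [IsIntegrallyClosed A] [IsAdicComplete (IsLocalRing.maximalIdeal A) A]
    (hdim : ringKrullDim A = 2)
    (𝒪 : Type*) [CommRing 𝒪] [IsDomain 𝒪] [IsDiscreteValuationRing 𝒪]
    [IsAdicComplete (IsLocalRing.maximalIdeal 𝒪) 𝒪] [Algebra 𝒪 A]
    (π : 𝒪) (hπ : Irreducible π)
    (α β : A) (hα : α ≠ 0) (hβ : β ≠ 0)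
    (hαred : Squarefree α) (hβred : Squarefree β)
    (hαvert : ∃ n : ℕ, α ∣ algebraMap 𝒪 A (π ^ n))
    (hβvert : ∃ n : ℕ, β ∣ algebraMap 𝒪 A (π ^ n))
    (hrp : IsRelPrime α β)
    (hlen : Ideal.span {α, β} = IsLocalRing.maximalIdeal A) :
    (∃ x y : A, IsLocalRing.maximalIdeal A = Ideal.span {x, y}) ∧ Prime α ∧ Prime β := by
  refine ⟨⟨α, β, hlen.symm⟩, key_prime hdim α β hα hlen, key_prime hdim β α hβ ?_⟩
  rwa [Ideal.span_pair_comm]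
end

section
/- Let v₀ be the Gauss valuation on K(t) over a complete discretely valued field K, let c, c' ∈ 𝒪_K with v_K(c − c') = 0, let μ, μ' ∈ ℚ with μ, μ' > 0, and let α ∈ ℕ with α > μ. Under the change of variable u = π_K^α (t − c')/(t − c), the inductive valuation [v₀, v₁(t − c') = μ'] on K(t) equals the inductive valuation [v₀, v₁(u) = α + μ'] on K(u), and [v₀, v₁(t − c) = μ] equals [v₀, v₁(u) = α − μ]. -/
open Polynomial

/-- The inductive (Mac Lane) valuation `[v₀, v₁(t − c) = μ]` of inductive length one on
polynomials over `K`: if `p = ∑ aᵢ (t − c)ⁱ` then its value is `min_i (v_K(aᵢ) + i·μ)`.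
The `(t − c)`-adic digits `aᵢ` are the coefficients of the Taylor expansion of `p` at `c`. -/
noncomputable def lin1Val {K : Type*} [Field K] (vK : K → WithTop ℚ) (c : K) (mu : ℚ)
    (p : Polynomial K) : WithTop ℚ :=
  (Polynomial.taylor c p).support.inf fun i =>
    vK ((Polynomial.taylor c p).coeff i) + (((i : ℚ) * mu : ℚ) : WithTop ℚ)

namespace Stmt10Aux


variable {K : Type*} [Field K] (vK : K → WithTop ℚ)
variable (hv0 : ∀ x : K, vK x = ⊤ ↔ x = 0)
variable (hvmul : ∀ x y : K, vK (x * y) = vK x + vK y)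
variable (hvadd : ∀ x y : K, min (vK x) (vK y) ≤ vK (x + y))

include hv0 hvmul in
lemma vK_one : vK 1 = 0 := by
  have h := hvmul 1 1
  rw [mul_one] at h
  have hne : vK 1 ≠ ⊤ := by simp [hv0]
  lift vK (1 : K) to ℚ using hne with q hq
  have : q = q + q := by exact_mod_cast h
  have : q = 0 := by linarith
  exact_mod_cast this

include hv0 hvmul in
lemma vK_neg (x : K) : vK (-x) = vK x := by
  have hm : vK (-1 : K) = 0 := by
    have h := hvmul (-1 : K) (-1)
    rw [neg_mul_neg, one_mul, vK_one vK hv0 hvmul] at h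
    have hne : vK (-1 : K) ≠ ⊤ := by simp [hv0]
    lift vK (-1 : K) to ℚ using hne with q hq
    have : (0 : ℚ) = q + q := by exact_mod_cast h
    have : q = 0 := by linarith
    exact_mod_cast this
  rw [show -x = (-1 : K) * x by ring, hvmul, hm, zero_add]

include hv0 hvmul hvadd in
lemma vK_nat (m : ℕ) : 0 ≤ vK (m : K) := by
  induction m with
  | zero => simp [(hv0 (0 : K)).mpr rfl]
  | succ k ih =>
    have h := hvadd (k : K) 1
    push_cast
    exact le_trans (le_min ih (le_of_eq (vK_one vK hv0 hvmul).symm)) h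

include hv0 hvmul in
lemma vK_pow (x : K) (q : ℚ) (h : vK x = (q : WithTop ℚ)) (k : ℕ) :
    vK (x ^ k) = (((k : ℚ) * q : ℚ) : WithTop ℚ) := by
  induction k with
  | zero => simp [vK_one vK hv0 hvmul]
  | succ m ih =>
    rw [pow_succ, hvmul, ih, h, ← WithTop.coe_add]
    norm_cast
    push_cast
    ring

include hv0 hvadd in
lemma vK_sum_le {ι : Type*} (s : Finset ι) (g : ι → K) :
    s.inf (fun i => vK (g i)) ≤ vK (∑ i ∈ s, g i) := by
  induction s using Finset.cons_induction_on with
  | empty => simp [(hv0 (0 : K)).mpr rfl]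
  | @cons a s ha ih =>
    rw [Finset.sum_cons, Finset.inf_cons]
    exact le_trans (min_le_min le_rfl ih) (hvadd _ _)

include hv0 hvmul hvadd in
lemma vK_add_left {x y : K} (h : vK x < vK y) : vK (x + y) = vK x := by
  refine le_antisymm ?_ ?_
  · have h2 := hvadd (x + y) (-y)
    rw [add_neg_cancel_right] at h2
    rcases le_total (vK (x + y)) (vK (-y)) with hle | hle
    · rwa [min_eq_left hle] at h2
    · rw [min_eq_right hle, vK_neg vK hv0 hvmul] at h2
      exact absurd h (not_lt.2 h2)
  · have h2 := hvadd x y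
    rwa [min_eq_left h.le] at h2

include hv0 hvmul hvadd in
lemma vK_sum_eq {ι : Type*} [DecidableEq ι] (s : Finset ι) (g : ι → K) (i₀ : ι)
    (h₀ : i₀ ∈ s) (htop : vK (g i₀) ≠ ⊤)
    (h : ∀ i ∈ s, i ≠ i₀ → vK (g i₀) < vK (g i)) :
    vK (∑ i ∈ s, g i) = vK (g i₀) := by
  rw [← Finset.add_sum_erase s g h₀]
  have hlt : vK (g i₀) < vK (∑ i ∈ s.erase i₀, g i) := by
    refine lt_of_lt_of_le ?_ (vK_sum_le vK hv0 hvadd _ _)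
    rw [Finset.lt_inf_iff (lt_top_iff_ne_top.2 htop)]
    intro i hi
    exact h i (Finset.mem_of_mem_erase hi) (Finset.ne_of_mem_erase hi)
  exact vK_add_left vK hv0 hvmul hvadd hlt

lemma inf_add_const {ι : Type*} (s : Finset ι) (F : ι → WithTop ℚ) (c : WithTop ℚ) :
    (s.inf fun i => F i + c) = s.inf F + c := by
  induction s using Finset.cons_induction_on with
  | empty => simp
  | @cons a s ha ih => rw [Finset.inf_cons, Finset.inf_cons, ih,
      min_add_add_right]

lemma inf_subset {ι : Type*} (s t : Finset ι) (hst : s ⊆ t) (F : ι → WithTop ℚ)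
    (h : ∀ j ∈ t, j ∉ s → F j = ⊤) : s.inf F = t.inf F := by
  refine le_antisymm (Finset.le_inf fun j hj => ?_) (Finset.inf_mono hst)
  by_cases hjs : j ∈ s
  · exact Finset.inf_le hjs
  · rw [h j hj hjs]; exact le_top

include hv0 hvmul hvadd in
lemma core (n : ℕ) (b : ℕ → K) (S : ℕ → K[X]) (τ : ℕ → ℕ) (ρ : ℚ) (hρ : 0 < ρ)
    (hdeg : ∀ i, i ≤ n → (S i).natDegree ≤ n)
    (hτn : ∀ i, i ≤ n → τ i ≤ n)
    (hinj : ∀ i, i ≤ n → ∀ i', i' ≤ n → τ i = τ i' → i = i')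
    (h1 : ∀ i, i ≤ n → ∀ j, (0 : WithTop ℚ) ≤ vK ((S i).coeff j))
    (h2 : ∀ i, i ≤ n → ∀ j, (S i).coeff j ≠ 0 → τ i ≤ j)
    (h3 : ∀ i, i ≤ n → vK ((S i).coeff (τ i)) = 0) :
    (∑ i ∈ Finset.range (n + 1), C (b i) * S i).support.inf
      (fun j => vK ((∑ i ∈ Finset.range (n + 1), C (b i) * S i).coeff j)
        + (((j : ℚ) * ρ : ℚ) : WithTop ℚ))
    = (Finset.range (n + 1)).inf
        (fun i => vK (b i) + ((((τ i : ℚ)) * ρ : ℚ) : WithTop ℚ)) := by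
  set R := Finset.range (n + 1) with hR
  set P : K[X] := ∑ i ∈ R, C (b i) * S i with hP
  set F : ℕ → WithTop ℚ := fun j => vK (P.coeff j) + (((j : ℚ) * ρ : ℚ) : WithTop ℚ) with hF
  set f : ℕ → WithTop ℚ := fun i => vK (b i) + ((((τ i : ℚ)) * ρ : ℚ) : WithTop ℚ) with hf
  have hcoeff : ∀ j, P.coeff j = ∑ i ∈ R, b i * (S i).coeff j := by
    intro j
    rw [hP, finset_sum_coeff]
    exact Finset.sum_congr rfl fun i _ => coeff_C_mul _
  have hmemn : ∀ i ∈ R, i ≤ n := fun i hi => by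
    rw [hR, Finset.mem_range] at hi; omega
  have hsupp : P.support ⊆ R := by
    intro j hj
    rw [mem_support_iff] at hj
    rw [hR, Finset.mem_range]
    by_contra hc
    push_neg at hc
    apply hj
    rw [hcoeff]
    refine Finset.sum_eq_zero fun i hi => ?_
    have : (S i).coeff j = 0 :=
      coeff_eq_zero_of_natDegree_lt (lt_of_le_of_lt (hdeg i (hmemn i hi)) (by omega))
    rw [this, mul_zero]
  rw [inf_subset P.support R hsupp F (fun j _ hj => by
    rw [hF]
    simp only [notMem_support_iff.mp hj, (hv0 (0 : K)).mpr rfl, top_add])]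
  -- lower bound : R.inf f ≤ R.inf F
  have hge : R.inf f ≤ R.inf F := by
    refine Finset.le_inf fun j hj => ?_
    rw [hF]
    simp only []
    rw [hcoeff]
    refine le_trans ?_ (add_le_add_left (vK_sum_le vK hv0 hvadd R
      (fun i => b i * (S i).coeff j)) _)
    rw [← inf_add_const]
    refine Finset.le_inf fun i hi => ?_
    rcases eq_or_ne ((S i).coeff j) 0 with h0 | h0
    · rw [h0, mul_zero, (hv0 (0 : K)).mpr rfl, top_add]
      exact le_top
    · have hij : τ i ≤ j := h2 i (hmemn i hi) j h0
      refine le_trans (Finset.inf_le hi) ?_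
      rw [hf]
      simp only []
      rw [hvmul]
      have hc : (((τ i : ℚ) * ρ : ℚ) : WithTop ℚ) ≤ (((j : ℚ) * ρ : ℚ) : WithTop ℚ) := by
        exact_mod_cast mul_le_mul_of_nonneg_right (by exact_mod_cast hij) hρ.le
      exact add_le_add (le_add_of_nonneg_right (h1 i (hmemn i hi) j)) hc
  refine le_antisymm ?_ hge
  -- upper bound
  set M := R.inf f with hM
  rcases eq_or_ne M ⊤ with htop | htop
  · rw [htop]; exact le_top
  have hRne : R.Nonempty := ⟨0, by rw [hR]; exact Finset.mem_range.mpr (by omega)⟩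
  obtain ⟨i₁, hi₁, hMi₁⟩ := Finset.exists_mem_eq_inf R hRne f
  set s : Finset ℕ := R.filter (fun i => f i = M) with hs
  have hi₁s : i₁ ∈ s := by
    rw [hs, Finset.mem_filter]
    exact ⟨hi₁, hMi₁.symm⟩
  obtain ⟨i₀, hi₀s, hτmin⟩ := Finset.exists_min_image s τ ⟨i₁, hi₁s⟩
  have hi₀R : i₀ ∈ R := (Finset.mem_filter.mp hi₀s).1
  have hi₀n : i₀ ≤ n := hmemn i₀ hi₀R
  have hfi₀ : f i₀ = M := (Finset.mem_filter.mp hi₀s).2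
  have hbtop : vK (b i₀) ≠ ⊤ := by
    intro hb
    apply htop
    rw [← hfi₀, hf]
    simp only [hb, top_add]
  have hgtop : vK (b i₀ * (S i₀).coeff (τ i₀)) ≠ ⊤ := by
    rw [hvmul, h3 i₀ hi₀n, add_zero]
    exact hbtop
  -- the key computation
  have hkey : vK (P.coeff (τ i₀)) = vK (b i₀) := by
    rw [hcoeff]
    rw [vK_sum_eq vK hv0 hvmul hvadd R (fun i => b i * (S i).coeff (τ i₀)) i₀ hi₀R hgtop ?_]
    · rw [hvmul, h3 i₀ hi₀n, add_zero]
    intro i hiR hne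
    have hin : i ≤ n := hmemn i hiR
    show vK (b i₀ * (S i₀).coeff (τ i₀)) < vK (b i * (S i).coeff (τ i₀))
    rw [hvmul, h3 i₀ hi₀n, add_zero]
    by_cases hτlt : τ i₀ < τ i
    · have hz : (S i).coeff (τ i₀) = 0 := by
        by_contra hc
        exact absurd (h2 i hin _ hc) (by omega)
      rw [hz, mul_zero, (hv0 (0 : K)).mpr rfl]
      exact lt_top_iff_ne_top.mpr hbtop
    · have hττ : τ i < τ i₀ := by
        rcases lt_or_eq_of_le (not_lt.mp hτlt) with h | h
        · exact h
        · exact absurd (hinj i hin i₀ hi₀n h) hne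
      have hfi : f i₀ < f i := by
        rcases lt_or_eq_of_le (hM ▸ Finset.inf_le hiR : M ≤ f i) with h | h
        · rw [hfi₀]; exact h
        · exfalso
          have : i ∈ s := Finset.mem_filter.mpr ⟨hiR, h.symm⟩
          exact absurd (hτmin i this) (by omega)
      have hb : vK (b i₀) < vK (b i) := by
        have h1' : vK (b i₀) + (((τ i₀ : ℚ) * ρ : ℚ) : WithTop ℚ)
            < vK (b i) + (((τ i₀ : ℚ) * ρ : ℚ) : WithTop ℚ) := by
          refine lt_of_lt_of_le hfi ?_
          rw [hf]
          simp only []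
          refine add_le_add_right ?_ _
          exact_mod_cast mul_le_mul_of_nonneg_right (by exact_mod_cast hττ.le) hρ.le
        exact (WithTop.add_lt_add_iff_right (WithTop.coe_ne_top)).mp h1'
      rw [hvmul]
      exact lt_of_lt_of_le hb (le_add_of_nonneg_right (h1 i hin _))
  have hτi₀R : τ i₀ ∈ R := by
    rw [hR, Finset.mem_range]
    have := hτn i₀ hi₀n
    omega
  refine le_trans (Finset.inf_le hτi₀R) ?_
  show vK (P.coeff (τ i₀)) + (((τ i₀ : ℚ) * ρ : ℚ) : WithTop ℚ) ≤ M
  rw [hkey]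
  exact le_of_eq hfi₀


end Stmt10Aux

open Stmt10Aux in
/-- Let `v_K` be a discrete valuation on `K` with uniformizer `π`
(`v_K(π) = 1`), let `c, c' ∈ 𝒪_K` with `v_K(c − c') = 0`, let `μ, μ' > 0` be rationals and
`α ∈ ℕ` with `α > μ`.  Under the change of variable `u = π^α (t − c')/(t − c)`, the valuation
`[v₀, v₁(t − c') = μ']` equals `[v₀, v₁(u) = α + μ']` and `[v₀, v₁(t − c) = μ]` equals
`[v₀, v₁(u) = α − μ]` on all of `K(t) = K(u)`.  Concretely (clearing denominators): for every
polynomial `f(u) = ∑ᵢ aᵢ uⁱ` of degree `≤ n`, setting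
`P = (t − c)ⁿ · f(u) = ∑ᵢ aᵢ π^{αi} (t − c')ⁱ (t − c)^{n−i}`, one has
`[v₀, v₁(t − c') = μ'](P) = min_i (v_K(aᵢ) + (α + μ')·i)`, and
`[v₀, v₁(t − c) = μ](P) = min_i (v_K(aᵢ) + (α − μ)·i) + n·μ`. -/
theorem stmt10 {K : Type*} [Field K] (vK : K → WithTop ℚ)
    (hv0 : ∀ x : K, vK x = ⊤ ↔ x = 0)
    (hvmul : ∀ x y : K, vK (x * y) = vK x + vK y)
    (hvadd : ∀ x y : K, min (vK x) (vK y) ≤ vK (x + y))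
    (π : K) (hπ : vK π = ((1 : ℚ) : WithTop ℚ))
    (c c' : K) (hcc' : vK (c - c') = ((0 : ℚ) : WithTop ℚ))
    (μ μ' : ℚ) (hμ : 0 < μ) (hμ' : 0 < μ')
    (α : ℕ) (hα : μ < (α : ℚ))
    (n : ℕ) (a : ℕ → K) :
    lin1Val vK c' μ'
        (∑ i ∈ Finset.range (n + 1),
          Polynomial.C (a i) * Polynomial.C π ^ (α * i) *
            (Polynomial.X - Polynomial.C c') ^ i * (Polynomial.X - Polynomial.C c) ^ (n - i))
        = (Finset.range (n + 1)).inf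
            (fun i => vK (a i) + (((((α : ℚ) + μ') * i : ℚ)) : WithTop ℚ)) ∧
    lin1Val vK c μ
        (∑ i ∈ Finset.range (n + 1),
          Polynomial.C (a i) * Polynomial.C π ^ (α * i) *
            (Polynomial.X - Polynomial.C c') ^ i * (Polynomial.X - Polynomial.C c) ^ (n - i))
        = (Finset.range (n + 1)).inf
            (fun i => vK (a i) + (((((α : ℚ) - μ) * i : ℚ)) : WithTop ℚ))
          + (((n : ℚ) * μ : ℚ) : WithTop ℚ) := by
  have hd : vK (c' - c) = ((0 : ℚ) : WithTop ℚ) := by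
    rw [show c' - c = -(c - c') by ring, vK_neg vK hv0 hvmul, hcc']
  set P : K[X] := ∑ i ∈ Finset.range (n + 1),
      C (a i) * C π ^ (α * i) * (X - C c') ^ i * (X - C c) ^ (n - i) with hPdef
  constructor
  · -- part 1 : expansion at c'
    have hQ : taylor c' P = ∑ i ∈ Finset.range (n + 1),
        C (a i * π ^ (α * i)) * ((X + C (c' - c)) ^ (n - i) * X ^ i) := by
      rw [hPdef, map_sum]
      refine Finset.sum_congr rfl fun i _ => ?_
      rw [taylor_apply]
      simp only [mul_comp, pow_comp, sub_comp, X_comp, C_comp, map_mul, map_pow, map_sub]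
      ring
    simp only [lin1Val]
    rw [hQ]
    rw [core vK hv0 hvmul hvadd n (fun i => a i * π ^ (α * i))
      (fun i => (X + C (c' - c)) ^ (n - i) * X ^ i) (fun i => i) μ' hμ'
      ?_ ?_ ?_ ?_ ?_ ?_]
    · refine Finset.inf_congr rfl fun i hi => ?_
      rw [hvmul, vK_pow vK hv0 hvmul π 1 hπ (α * i)]
      by_cases hai : a i = 0
      · simp [(hv0 _).mpr hai, top_add]
      · have hne : vK (a i) ≠ ⊤ := fun h => hai ((hv0 _).mp h)
        lift vK (a i) to ℚ using hne with q
        norm_cast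
        push_cast
        ring
    · -- hdeg
      intro i hi
      refine le_trans natDegree_mul_le ?_
      have hb : ((X + C (c' - c)) ^ (n - i)).natDegree ≤ n - i :=
        le_trans (natDegree_pow_le) (by rw [natDegree_X_add_C]; omega)
      rw [natDegree_X_pow]
      omega
    · intro i hi; exact hi
    · intro i _ i' _ h; exact h
    · -- h1
      intro i hi j
      rw [coeff_mul_X_pow']
      split_ifs with h
      · rw [coeff_X_add_C_pow, hvmul, vK_pow vK hv0 hvmul _ 0 hd]
        simp only [mul_zero, WithTop.coe_zero, zero_add]
        exact vK_nat vK hv0 hvmul hvadd _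
      · rw [(hv0 _).mpr rfl]; exact le_top
    · -- h2
      intro i hi j hne
      rw [coeff_mul_X_pow'] at hne
      show i ≤ j
      by_contra h
      rw [if_neg h] at hne
      exact hne rfl
    · -- h3
      intro i hi
      show vK ((((X + C (c' - c)) ^ (n - i) * X ^ i)).coeff i) = 0
      rw [coeff_mul_X_pow', if_pos le_rfl, Nat.sub_self, coeff_X_add_C_pow, Nat.sub_zero,
        Nat.choose_zero_right, Nat.cast_one, mul_one, vK_pow vK hv0 hvmul _ 0 hd]
      simp
  · -- part 2 : expansion at c
    have hQ : taylor c P = ∑ i ∈ Finset.range (n + 1),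
        C (a i * π ^ (α * i)) * ((X + C (c - c')) ^ i * X ^ (n - i)) := by
      rw [hPdef, map_sum]
      refine Finset.sum_congr rfl fun i _ => ?_
      rw [taylor_apply]
      simp only [mul_comp, pow_comp, sub_comp, X_comp, C_comp, map_mul, map_pow, map_sub]
      ring
    simp only [lin1Val]
    rw [hQ]
    rw [core vK hv0 hvmul hvadd n (fun i => a i * π ^ (α * i))
      (fun i => (X + C (c - c')) ^ i * X ^ (n - i)) (fun i => n - i) μ hμ
      ?_ ?_ ?_ ?_ ?_ ?_]
    · rw [← inf_add_const]
      refine Finset.inf_congr rfl fun i hi => ?_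
      have hin : i ≤ n := by rw [Finset.mem_range] at hi; omega
      rw [hvmul, vK_pow vK hv0 hvmul π 1 hπ (α * i)]
      by_cases hai : a i = 0
      · simp [(hv0 _).mpr hai, top_add]
      · have hne : vK (a i) ≠ ⊤ := fun h => hai ((hv0 _).mp h)
        lift vK (a i) to ℚ using hne with q
        norm_cast
        push_cast [Nat.cast_sub hin]
        ring
    · -- hdeg
      intro i hi
      refine le_trans natDegree_mul_le ?_
      have hb : ((X + C (c - c')) ^ i).natDegree ≤ i :=
        le_trans (natDegree_pow_le) (by rw [natDegree_X_add_C]; omega)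
      rw [natDegree_X_pow]
      omega
    · intro i hi; show n - i ≤ n; omega
    · intro i hi i' hi' h
      have h' : n - i = n - i' := h
      omega
    · -- h1
      intro i hi j
      rw [coeff_mul_X_pow']
      split_ifs with h
      · rw [coeff_X_add_C_pow, hvmul, vK_pow vK hv0 hvmul _ 0 hcc']
        simp only [mul_zero, WithTop.coe_zero, zero_add]
        exact vK_nat vK hv0 hvmul hvadd _
      · rw [(hv0 _).mpr rfl]; exact le_top
    · -- h2
      intro i hi j hne
      rw [coeff_mul_X_pow'] at hne
      show n - i ≤ j
      by_contra h
      rw [if_neg h] at hne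
      exact hne rfl
    · -- h3
      intro i hi
      show vK ((((X + C (c - c')) ^ i * X ^ (n - i))).coeff (n - i)) = 0
      rw [coeff_mul_X_pow', if_pos le_rfl, Nat.sub_self, coeff_X_add_C_pow, Nat.sub_zero,
        Nat.choose_zero_right, Nat.cast_one, mul_one, vK_pow vK hv0 hvmul _ 0 hcc']
      simp
end

section
/- Let v and w be Mac Lane pseudovaluations on K[x] over a complete discretely valued field K, and let u be a Mac Lane pseudovaluation. Suppose V is an inf-closed set of Mac Lane pseudovaluations containing u, and W is an inf-closed set of Mac Lane pseudovaluations such that u ⪯ w' for all w' ∈ W and such that inf(v', w') = u for all v' ∈ V with u ⪯ v' and all w' ∈ W. Then V ∪ W is inf-closed. -/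
lemma stmt11_aux {α : Type*} [SemilatticeInf α]
    (htot : ∀ w a b : α, a ≤ w → b ≤ w → a ≤ b ∨ b ≤ a)
    (V W : Set α) (u : α) (huV : u ∈ V)
    (hV : InfClosed V)
    (huW : ∀ w ∈ W, u ≤ w)
    (hinf : ∀ v ∈ V, u ≤ v → ∀ w ∈ W, v ⊓ w = u)
    {v w : α} (hv : v ∈ V) (hw : w ∈ W) : v ⊓ w ∈ V := by
  rcases htot w (v ⊓ w) u inf_le_right (huW w hw) with h | h
  · have : v ⊓ w = v ⊓ u :=
      le_antisymm (le_inf inf_le_left h) (le_inf inf_le_left ((inf_le_right).trans (huW w hw)))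
    rw [this]; exact hV hv huV
  · have huv : u ≤ v := h.trans inf_le_left
    rw [hinf v hv huv w hw]; exact huV

/-- In the poset of Mac Lane pseudovaluations (abstracted here as a
meet-semilattice in which the set of elements below any fixed element is totally ordered),
suppose `V` is an inf-closed set containing `u`, and `W` is an inf-closed set such that
`u ⪯ w` for all `w ∈ W` and `inf(v, w) = u` whenever `v ∈ V` with `u ⪯ v` and `w ∈ W`.
Then `V ∪ W` is inf-closed. -/
theorem stmt11 {α : Type*} [SemilatticeInf α]
    (htot : ∀ w a b : α, a ≤ w → b ≤ w → a ≤ b ∨ b ≤ a)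
    (V W : Set α) (u : α) (huV : u ∈ V)
    (hV : InfClosed V) (hW : InfClosed W)
    (huW : ∀ w ∈ W, u ≤ w)
    (hinf : ∀ v ∈ V, u ≤ v → ∀ w ∈ W, v ⊓ w = u) :
    InfClosed (V ∪ W) := by
  intro x hx y hy
  rcases hx with hx | hx <;> rcases hy with hy | hy
  · exact Or.inl (hV hx hy)
  · exact Or.inl (stmt11_aux htot V W u huV hV huW hinf hx hy)
  · rw [inf_comm]
    exact Or.inl (stmt11_aux htot V W u huV hV huW hinf hy hx)
  · exact Or.inr (hW hx hy)
end
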